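/- arXiv:2208.05597 — 2 statements merged into one kernel-verified Lean document; each statement's English description precedes it below -/
import Mathlib

section
/- Let θ, α, f, ε be real numbers with 0 < θ, 0 ≤ α, θ + α ≤ π/2, f ≥ 1, and ε > 0. If sin(θ+α) ≤ (sin θ / (2f)) · (1 + ε + √((1+ε)² + 4f(f−1))), then f · sin(θ+α)/sin θ − (f−1) · sin θ / sin(θ+α) ≤ 1 + ε. -/
theorem rotation_approx_bound (θ α f ε : ℝ) (hθ : 0 < θ) (hα : 0 ≤ α)
    (hsum : θ + α ≤ Real.pi / 2) (hf : 1 ≤ f) (hε : 0 < ε)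
    (h : Real.sin (θ + α) ≤
      Real.sin θ / (2 * f) * (1 + ε + Real.sqrt ((1 + ε) ^ 2 + 4 * f * (f - 1)))) :
    f * Real.sin (θ + α) / Real.sin θ - (f - 1) * Real.sin θ / Real.sin (θ + α) ≤ 1 + ε := by
  have hpi := Real.pi_pos
  have hs : 0 < Real.sin θ :=
    Real.sin_pos_of_pos_of_lt_pi hθ (by linarith)
  have ht : 0 < Real.sin (θ + α) :=
    Real.sin_pos_of_pos_of_lt_pi (by linarith) (by linarith)
  set s := Real.sin θ
  set t := Real.sin (θ + α)
  set D := Real.sqrt ((1 + ε) ^ 2 + 4 * f * (f - 1)) with hDdef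
  have harg : 0 ≤ (1 + ε) ^ 2 + 4 * f * (f - 1) := by nlinarith
  have hD2 : D ^ 2 = (1 + ε) ^ 2 + 4 * f * (f - 1) := Real.sq_sqrt harg
  have hD0 : 0 ≤ D := Real.sqrt_nonneg _
  have hf0 : 0 < f := by linarith
  have hcD : (1 + ε) ≤ D := by nlinarith
  have h' : 2 * f * t ≤ s * ((1 + ε) + D) := by
    rw [div_mul_eq_mul_div, le_div_iff₀ (by positivity)] at h
    nlinarith
  have hlow : s * ((1 + ε) - D) ≤ 2 * f * t := by nlinarith
  have hkey : f * t ^ 2 - (1 + ε) * s * t - (f - 1) * s ^ 2 ≤ 0 := by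
    have hprod : 0 ≤ (s * ((1 + ε) + D) - 2 * f * t) * (2 * f * t - s * ((1 + ε) - D)) :=
      mul_nonneg (by linarith) (by linarith)
    have hs2D : s ^ 2 * D ^ 2 = s ^ 2 * ((1 + ε) ^ 2 + 4 * f * (f - 1)) := by rw [hD2]
    have h4 : 4 * f * (f * t ^ 2 - (1 + ε) * s * t - (f - 1) * s ^ 2) ≤ 0 := by nlinarith [hprod, hs2D]
    nlinarith [h4, hf0]
  rw [div_sub_div _ _ hs.ne' ht.ne', div_le_iff₀ (by positivity)]
  nlinarith
end

section
/- Let θ ∈ (0, π/2), f > 1, and ε > 0 be real numbers, and set k = (1 + ε + √((1+ε)² + 4f(f−1))) / (2f). If k · sin θ ≤ 1, then arcsin(k · sin θ) − θ > θ·ε/(2f). -/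
theorem angular_deflection (θ f ε : ℝ) (hθ0 : 0 < θ) (hθ1 : θ < Real.pi / 2)
    (hf : 1 < f) (hε : 0 < ε) :
    let k := (1 + ε + Real.sqrt ((1 + ε) ^ 2 + 4 * f * (f - 1))) / (2 * f)
    k * Real.sin θ ≤ 1 → Real.arcsin (k * Real.sin θ) - θ > θ * ε / (2 * f) := by
  intro k hk1
  have hπ := Real.pi_pos
  have hf0 : (0:ℝ) < f := by linarith
  have hsinθ : 0 < Real.sin θ := Real.sin_pos_of_pos_of_lt_pi hθ0 (by linarith)
  -- k > 1 + ε/(2f)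
  have hsqrt : Real.sqrt ((1 + ε) ^ 2 + 4 * f * (f - 1)) > 2 * f - 1 := by
    have h1 : ((2*f - 1):ℝ)^2 < (1 + ε) ^ 2 + 4 * f * (f - 1) := by nlinarith
    calc 2*f - 1 = Real.sqrt ((2*f-1)^2) := by rw [Real.sqrt_sq (by linarith)]
      _ < _ := Real.sqrt_lt_sqrt (by positivity) h1
  have hk : 1 + ε / (2 * f) < k := by
    rw [show (1:ℝ) + ε / (2*f) = (2*f + ε) / (2*f) by field_simp]
    exact div_lt_div_of_pos_right (by linarith) (by linarith)
  have hk1' : (1:ℝ) < k := by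
    have : 0 < ε / (2*f) := by positivity
    linarith
  have hk0 : 0 < k := by linarith
  -- Jordan: kθ ≤ π/2
  have hjordan : 2 / Real.pi * θ ≤ Real.sin θ :=
    Real.mul_le_sin hθ0.le hθ1.le
  have hkθ : k * θ ≤ Real.pi / 2 := by
    have h2 : k * (2 / Real.pi * θ) ≤ 1 :=
      le_trans (by nlinarith) hk1
    have h3 : k * θ * 2 / Real.pi ≤ 1 := by
      calc k * θ * 2 / Real.pi = k * (2 / Real.pi * θ) := by ring
        _ ≤ 1 := h2
    have h4 : k * θ * 2 ≤ Real.pi := (div_le_one hπ).mp h3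
    linarith
  -- strict concavity of sin on [0, π]: sin(kθ) < k sin θ
  have hconc : Real.sin (k * θ) < k * Real.sin θ := by
    have hne : (0:ℝ) ≠ k * θ := (by positivity : (0:ℝ) < k * θ).ne
    have ha : (0:ℝ) < 1 - 1/k := by
      have : 1/k < 1 := by rw [div_lt_one hk0]; exact hk1'
      linarith
    have hb : (0:ℝ) < 1/k := by positivity
    have h := strictConcaveOn_sin_Icc.2 (Set.mem_Icc.mpr ⟨le_refl 0, hπ.le⟩)
      (Set.mem_Icc.mpr ⟨by positivity, by linarith⟩) hne ha hb (by ring)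
    simp only [Real.sin_zero, smul_eq_mul, mul_zero, zero_add] at h
    rw [show 1/k * (k*θ) = θ by rw [one_div, inv_mul_cancel_left₀ hk0.ne']] at h
    calc Real.sin (k*θ) = k * ((1/k) * Real.sin (k*θ)) := by field_simp
      _ < k * Real.sin θ := by
          apply mul_lt_mul_of_pos_left _ hk0
          simpa using h
  -- arcsin(k sin θ) > kθ
  have harc : k * θ < Real.arcsin (k * Real.sin θ) := by
    have h1 : Real.arcsin (Real.sin (k*θ)) < Real.arcsin (k * Real.sin θ) := by
      apply Real.strictMonoOn_arcsin _ _ hconc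
      · constructor
        · exact le_trans (by linarith) (Real.neg_one_le_sin _)
        · exact Real.sin_le_one _
      · constructor
        · nlinarith [hsinθ, hk0]
        · exact hk1
    rwa [Real.arcsin_sin (by nlinarith) hkθ] at h1
  have : θ + θ * ε / (2 * f) < k * θ := by
    have := mul_lt_mul_of_pos_right hk hθ0
    calc θ + θ * ε / (2*f) = (1 + ε/(2*f)) * θ := by ring
      _ < k * θ := this
  linarith
end
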